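/- arXiv:1512.05966 — 2 statements merged into one kernel-verified Lean document; each statement's English description precedes it below -/
import Mathlib

section
/- Let 𝓕 be the family of all λ-measurable subsets M of 2^ω such that M has density 1 at every point of M. Then 𝓕 is closed under finite intersections, and for every subfamily ℋ ⊆ 𝓕 the union ⋃ℋ is λ-measurable and again belongs to 𝓕 (it has density 1 at each of its points). Consequently 𝓕 is a topology on 2^ω (the density topology), and every set open in this topology is λ-measurable. -/
open MeasureTheory Filter Topology
open scoped ENNReal

/-- The basic cylinder `N_s` determined by a finite binary sequence `s`:
the set of all `β ∈ 2^ω` extending `s`. -/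
def cyl (s : List Bool) : Set (ℕ → Bool) :=
  {β | ∀ i : Fin s.length, β i = s.get i}

/-- The initial segment `β↾l` of `β ∈ 2^ω`, as a finite binary sequence. -/
def seg (β : ℕ → Bool) (l : ℕ) : List Bool := List.ofFn (fun i : Fin l => β i)

/-- A martingale: a `[0,1]`-valued function on finite binary sequences with
`f(s) = (f(s⌢0) + f(s⌢1))/2`. -/
def IsMartingale (f : List Bool → ℝ) : Prop :=
  (∀ s, f s ∈ Set.Icc (0:ℝ) 1) ∧
  ∀ s, f s = (f (s ++ [false]) + f (s ++ [true])) / 2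

/-- The oscillation `osc(f,β) = inf_N sup_{p,q ≥ N} |f(β↾p) − f(β↾q)|`. -/
noncomputable def osc (f : List Bool → ℝ) (β : ℕ → Bool) : ℝ :=
  ⨅ N : ℕ, ⨆ p : {n : ℕ // N ≤ n}, ⨆ q : {n : ℕ // N ≤ n},
    |f (seg β p.1) - f (seg β q.1)|

/-- The set of divergence `D(f) = {β : osc(f,β) > 0}`. -/
def divSet (f : List Bool → ℝ) : Set (ℕ → Bool) := {β | 0 < osc f β}

/-- `M` has density 1 at `β`: `λ(M ∩ N_{β↾l}) / λ(N_{β↾l}) → 1`. -/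
def densityOne (μ : Measure (ℕ → Bool)) (M : Set (ℕ → Bool)) (β : ℕ → Bool) : Prop :=
  Tendsto (fun l : ℕ => μ (M ∩ cyl (seg β l)) / μ (cyl (seg β l))) atTop (𝓝 1)

/-- A set is `Σ⁰₃` iff it is a countable union of `Gδ` sets. -/
def IsSigma03 {X : Type*} [TopologicalSpace X] (S : Set X) : Prop :=
  ∃ g : ℕ → Set X, (∀ n, IsGδ (g n)) ∧ S = ⋃ n, g n

/-- A set is coanalytic (`Π¹₁`) iff its complement is analytic. -/
def IsCoanalytic {X : Type*} [TopologicalSpace X] (S : Set X) : Prop :=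
  MeasureTheory.AnalyticSet Sᶜ

/-- The associated (partial) function of a martingale: `ψ(f)(β) = lim_l f(β↾l)`
(a junk value if the limit does not exist). -/
noncomputable def psi (f : List Bool → ℝ) (β : ℕ → Bool) : ℝ :=
  limUnder atTop (fun l => f (seg β l))

/-- The family of λ-measurable sets having density 1 at each of their points. -/
def densFam (μ : Measure (ℕ → Bool)) : Set (Set (ℕ → Bool)) :=
  {M | NullMeasurableSet M μ ∧ ∀ β ∈ M, densityOne μ M β}

/-! Cylinders are either nested or disjoint, so the minimal members of any family of cylinders are
pairwise disjoint and have the same union. Hence if `W` has relative measure at most `1/2` in each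
of them, it has relative measure at most `1/2` in their union. Covering, inside an open set of
nearly minimal measure, the points of `W` at which this happens at arbitrarily fine scales shows
that these points form a null set: the Lebesgue density theorem on `2^ω`.

For a union `⋃ℋ`, a countable subfamily has a measurable union `V` containing every member of `ℋ`
up to a null set. Every point of `⋃ℋ \ V` is then a point outside `V` at which `V` has density
one, so `⋃ℋ \ V` is null and `⋃ℋ` is measurable. -/

lemma mem_cyl_iff_seg_eq {s : List Bool} {β : ℕ → Bool} : β ∈ cyl s ↔ seg β s.length = s := by
  simp [cyl, seg, List.ext_getElem_iff, Fin.forall_iff]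

lemma cyl_seg (β : ℕ → Bool) (l : ℕ) : cyl (seg β l) = PiNat.cylinder β l := by
  ext γ
  simp [cyl, seg, Fin.forall_iff]

lemma mem_cyl_seg (β : ℕ → Bool) (l : ℕ) : β ∈ cyl (seg β l) :=
  cyl_seg β l ▸ PiNat.self_mem_cylinder β l

lemma take_seg (β : ℕ → Bool) {k l : ℕ} (h : k ≤ l) : (seg β l).take k = seg β k :=
  List.ext_getElem (by simp [seg, h]) fun i _ _ => by simp [seg]

lemma seg_prefix_seg (β : ℕ → Bool) {k l : ℕ} (h : k ≤ l) : seg β k <+: seg β l :=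
  take_seg β h ▸ List.take_prefix _ _

lemma cyl_subset_cyl {s t : List Bool} (h : t <+: s) : cyl s ⊆ cyl t := by
  intro β hβ
  rw [mem_cyl_iff_seg_eq] at hβ ⊢
  rw [← take_seg β h.length_le, hβ, ← List.prefix_iff_eq_take.mp h]

lemma prefix_or_prefix_of_mem_cyl {s t : List Bool} {β : ℕ → Bool} (hs : β ∈ cyl s)
    (ht : β ∈ cyl t) : s <+: t ∨ t <+: s := by
  rw [mem_cyl_iff_seg_eq] at hs ht
  rw [← hs, ← ht]
  rcases le_total s.length t.length with h | h
  exacts [.inl (seg_prefix_seg β h), .inr (seg_prefix_seg β h)]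

lemma measurableSet_cyl (s : List Bool) : MeasurableSet (cyl s) := by
  simp only [cyl, Set.ofPred_forall]
  exact .iInter fun i => measurableSet_eq_fun (measurable_pi_apply _) measurable_const

lemma cyl_nil : cyl [] = Set.univ := by
  simp [cyl]

lemma eventually_cyl_seg_subset {O : Set (ℕ → Bool)} (hO : IsOpen O) {β : ℕ → Bool}
    (hβ : β ∈ O) : ∀ᶠ l in atTop, cyl (seg β l) ⊆ O := by
  obtain ⟨_, ⟨x, n, rfl⟩, hβx, hxO⟩ :=
    (PiNat.isTopologicalBasis_cylinders _).exists_subset_of_mem_open hβ hO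
  rw [PiNat.mem_cylinder_iff_eq] at hβx
  filter_upwards [eventually_ge_atTop n] with l hl
  rw [cyl_seg]
  exact (PiNat.cylinder_anti β hl).trans (hβx ▸ hxO)

lemma exists_minimal_prefix {F : Set (List Bool)} {s : List Bool} (hs : s ∈ F) :
    ∃ t ∈ F, t <+: s ∧ ∀ u ∈ F, u <+: t → u = t := by
  obtain ⟨t, ⟨htF, hts⟩, hmin⟩ :=
    (measure List.length).wf.has_min {t | t ∈ F ∧ t <+: s} ⟨s, hs, List.prefix_refl s⟩
  refine ⟨t, htF, hts, fun u huF hut => hut.eq_of_length ?_⟩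
  exact le_antisymm hut.length_le (not_lt.1 (hmin u ⟨huF, hut.trans hts⟩))

lemma ENNReal.tendsto_nhds_one_iff_of_add_eq_one {ι : Type*} {l : Filter ι} {a b : ι → ℝ≥0∞}
    (h : ∀ i, a i + b i = 1) : Tendsto a l (𝓝 1) ↔ Tendsto b l (𝓝 0) := by
  have ha : a = fun i => 1 - b i := funext fun i =>
    ENNReal.eq_sub_of_add_eq (ne_top_of_le_ne_top one_ne_top (h i ▸ le_add_self)) (h i)
  have hb : b = fun i => 1 - a i := funext fun i =>
    ENNReal.eq_sub_of_add_eq (ne_top_of_le_ne_top one_ne_top (h i ▸ le_self_add))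
      ((add_comm _ _).trans (h i))
  constructor
  · intro h1
    simpa [hb] using ENNReal.Tendsto.sub tendsto_const_nhds h1 (.inl one_ne_top)
  · intro h0
    simpa [ha] using ENNReal.Tendsto.sub tendsto_const_nhds h0 (.inl one_ne_top)

section DensityOne

variable {μ : Measure (ℕ → Bool)} {M V : Set (ℕ → Bool)} {β : ℕ → Bool}

lemma densityOne.mono_ae (h : densityOne μ M β) (hMV : M ≤ᵐ[μ] V) : densityOne μ V β := by
  refine tendsto_of_tendsto_of_tendsto_of_le_of_le h tendsto_const_nhds (fun l => ?_) fun l => ?_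
  · exact ENNReal.div_le_div_right (measure_mono_ae (hMV.inter .rfl)) _
  · exact ENNReal.div_le_of_le_mul (by simpa using measure_mono Set.inter_subset_right)

variable [IsFiniteMeasure μ] (hμ : ∀ s, μ (cyl s) ≠ 0)
include hμ

lemma densityOne_iff_tendsto_diff (hM : NullMeasurableSet M μ) :
    densityOne μ M β ↔
      Tendsto (fun l => μ (cyl (seg β l) \ M) / μ (cyl (seg β l))) atTop (𝓝 0) := by
  refine ENNReal.tendsto_nhds_one_iff_of_add_eq_one fun l => ?_
  rw [ENNReal.div_add_div_same, Set.inter_comm, measure_inter_add_sdiff₀ _ hM,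
    ENNReal.div_self (hμ _) (measure_ne_top _ _)]

lemma densityOne.inter {M' : Set (ℕ → Bool)} (hM : NullMeasurableSet M μ)
    (hM' : NullMeasurableSet M' μ) (h : densityOne μ M β) (h' : densityOne μ M' β) :
    densityOne μ (M ∩ M') β := by
  rw [densityOne_iff_tendsto_diff hμ hM] at h
  rw [densityOne_iff_tendsto_diff hμ hM'] at h'
  rw [densityOne_iff_tendsto_diff hμ (hM.inter hM')]
  refine tendsto_of_tendsto_of_tendsto_of_le_of_le tendsto_const_nhds (by simpa using h.add h')
    (fun _ => zero_le) fun l => ?_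
  rw [ENNReal.div_add_div_same, Set.sdiff_inter]
  exact ENNReal.div_le_div_right (measure_union_le _ _) _

lemma densityOne_univ : densityOne μ Set.univ β := by
  simp only [densityOne, Set.univ_inter]
  exact tendsto_const_nhds.congr fun l => (ENNReal.div_self (hμ _) (measure_ne_top _ _)).symm

end DensityOne

section Density

variable {μ : Measure (ℕ → Bool)}

lemma measure_inter_biUnion_cyl_le {W : Set (ℕ → Bool)} {F : Set (List Bool)} {c : ℝ≥0∞}
    (hF : ∀ s ∈ F, μ (W ∩ cyl s) ≤ c * μ (cyl s)) :
    μ (W ∩ ⋃ s ∈ F, cyl s) ≤ c * μ (⋃ s ∈ F, cyl s) := by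
  set F' := {s ∈ F | ∀ t ∈ F, t <+: s → t = s}
  have hcover : ⋃ s ∈ F, cyl s = ⋃ s ∈ F', cyl s := by
    refine (Set.biUnion_subset_biUnion_left fun s hs => hs.1).antisymm' ?_
    refine Set.iUnion₂_subset fun s hs => ?_
    obtain ⟨t, htF, hts, hmin⟩ := exists_minimal_prefix hs
    exact (cyl_subset_cyl hts).trans (Set.subset_biUnion_of_mem (u := cyl) ⟨htF, hmin⟩)
  have hdisj : F'.PairwiseDisjoint cyl := fun s hs t ht hst =>
    Set.disjoint_left.2 fun β hβs hβt => (prefix_or_prefix_of_mem_cyl hβs hβt).elim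
      (fun h => hst (ht.2 s hs.1 h)) fun h => hst (hs.2 t ht.1 h).symm
  have hF' : F'.Countable := Set.to_countable F'
  rw [hcover, Set.inter_iUnion₂]
  calc μ (⋃ s ∈ F', W ∩ cyl s) ≤ ∑' s : F', μ (W ∩ cyl s) := measure_biUnion_le μ hF' _
    _ ≤ ∑' s : F', c * μ (cyl s) := ENNReal.tsum_le_tsum fun s => hF s s.2.1
    _ = c * μ (⋃ s ∈ F', cyl s) := by
      rw [ENNReal.tsum_mul_left, measure_biUnion hF' hdisj fun s _ => measurableSet_cyl s]

variable [IsFiniteMeasure μ]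

lemma measure_setOf_frequently_le_half_eq_zero (W : Set (ℕ → Bool)) :
    μ {β ∈ W | ∃ᶠ l in atTop, μ (W ∩ cyl (seg β l)) ≤ 2⁻¹ * μ (cyl (seg β l))} = 0 := by
  set Y := {β ∈ W | ∃ᶠ l in atTop, μ (W ∩ cyl (seg β l)) ≤ 2⁻¹ * μ (cyl (seg β l))}
  have hYO : ∀ O, Y ⊆ O → IsOpen O → μ Y ≤ 2⁻¹ * μ O := by
    intro O hYO hO
    set F := {s | cyl s ⊆ O ∧ μ (W ∩ cyl s) ≤ 2⁻¹ * μ (cyl s)}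
    have hcover : Y ⊆ W ∩ ⋃ s ∈ F, cyl s := by
      rintro β ⟨hβW, hβ⟩
      obtain ⟨l, hlO, hl⟩ :=
        ((eventually_cyl_seg_subset hO (hYO ⟨hβW, hβ⟩)).and_frequently hβ).exists
      exact ⟨hβW, Set.mem_biUnion (x := seg β l) ⟨hlO, hl⟩ (mem_cyl_seg β l)⟩
    calc μ Y ≤ μ (W ∩ ⋃ s ∈ F, cyl s) := measure_mono hcover
      _ ≤ 2⁻¹ * μ (⋃ s ∈ F, cyl s) := measure_inter_biUnion_cyl_le fun s hs => hs.2
      _ ≤ 2⁻¹ * μ O := by gcongr; exact Set.iUnion₂_subset fun s hs => hs.1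
  have hhalf : μ Y ≤ 2⁻¹ * μ Y := by
    conv_rhs => rw [Set.measure_eq_iInf_isOpen Y μ]
    simp_rw [ENNReal.mul_iInf_of_ne (by norm_num : (2⁻¹ : ℝ≥0∞) ≠ 0) (by simp)]
    exact le_iInf₂ fun O hO => le_iInf (hYO O hO)
  by_contra hY
  exact (ENNReal.half_lt_self hY (measure_ne_top _ _)).not_ge (by rwa [ENNReal.div_eq_inv_mul])

variable (hμ : ∀ s, μ (cyl s) ≠ 0)
include hμ

lemma measure_setOf_notMem_densityOne_eq_zero {V : Set (ℕ → Bool)} (hV : NullMeasurableSet V μ) :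
    μ {β | β ∉ V ∧ densityOne μ V β} = 0 := by
  refine measure_mono_null ?_ (measure_setOf_frequently_le_half_eq_zero Vᶜ)
  rintro β ⟨hβV, hβ⟩
  refine ⟨hβV, ?_⟩
  rw [densityOne_iff_tendsto_diff hμ hV] at hβ
  have hhalf : (0 : ℝ≥0∞) < 2⁻¹ := by norm_num
  refine (hβ.eventually (gt_mem_nhds hhalf)).frequently.mono fun l hl => ?_
  rw [Set.inter_comm, ← Set.sdiff_eq]
  exact ((ENNReal.div_lt_iff (.inl (hμ _)) (.inl (measure_ne_top _ _))).1 hl).le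

end Density

lemma MeasureTheory.exists_measurableSet_subset_sUnion_forall_ae_le {α : Type*}
    [MeasurableSpace α] {μ : Measure α} [SFinite μ] {H : Set (Set α)}
    (hH : ∀ M ∈ H, NullMeasurableSet M μ) :
    ∃ V, MeasurableSet V ∧ V ⊆ ⋃₀ H ∧ ∀ M ∈ H, M ≤ᵐ[μ] V := by
  obtain ⟨D, hDC, hD, hHD⟩ := Measure.exists_ae_subset_biUnion_countable μ
    (C := {M' | MeasurableSet M' ∧ ∃ M ∈ H, M' ⊆ M}) fun _ h => h.1
  refine ⟨⋃₀ D, .sUnion hD fun M' h => (hDC h).1, Set.sUnion_subset fun M' h => ?_,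
    fun M hM => ?_⟩
  · obtain ⟨M, hM, hM'M⟩ := (hDC h).2
    exact hM'M.trans (Set.subset_sUnion_of_mem hM)
  · obtain ⟨M', hM'M, hM', hae⟩ := (hH M hM).exists_measurable_subset_ae_eq
    exact hae.symm.le.trans (hHD M' ⟨hM', M, hM, hM'M⟩)

section DensityTopology

variable {μ : Measure (ℕ → Bool)} [IsFiniteMeasure μ] (hμ : ∀ s, μ (cyl s) ≠ 0)
include hμ

lemma univ_mem_densFam : Set.univ ∈ densFam μ :=
  ⟨.univ, fun _ _ => densityOne_univ hμ⟩

lemma inter_mem_densFam {M M' : Set (ℕ → Bool)} (hM : M ∈ densFam μ) (hM' : M' ∈ densFam μ) :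
    M ∩ M' ∈ densFam μ :=
  ⟨hM.1.inter hM'.1, fun β hβ => (hM.2 β hβ.1).inter hμ hM.1 hM'.1 (hM'.2 β hβ.2)⟩

lemma sUnion_mem_densFam {H : Set (Set (ℕ → Bool))} (hH : H ⊆ densFam μ) :
    ⋃₀ H ∈ densFam μ := by
  obtain ⟨V, hV, hVH, hHV⟩ := exists_measurableSet_subset_sUnion_forall_ae_le fun M hM => (hH hM).1
  have hnull : μ (⋃₀ H \ V) = 0 := by
    refine measure_mono_null ?_ (measure_setOf_notMem_densityOne_eq_zero hμ hV.nullMeasurableSet)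
    rintro β ⟨⟨M, hM, hβM⟩, hβV⟩
    exact ⟨hβV, ((hH hM).2 β hβM).mono_ae (hHV M hM)⟩
  refine ⟨hV.nullMeasurableSet.congr (hVH.eventuallyLE.antisymm (ae_le_set.2 hnull)), ?_⟩
  rintro β ⟨M, hM, hβM⟩
  exact ((hH hM).2 β hβM).mono_ae (Set.subset_sUnion_of_mem hM).eventuallyLE

end DensityTopology

/-- the family `𝓕` of λ-measurable sets with density 1 at each of
their points is closed under finite intersections; any union of a subfamily is
λ-measurable and again in `𝓕`; consequently `𝓕` is a topology (the density
topology), all of whose open sets are λ-measurable. -/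
theorem density_topology
    (μ : Measure (ℕ → Bool))
    (hμ : ∀ s : List Bool, μ (cyl s) = (1/2 : ℝ≥0∞) ^ s.length) :
    (∀ M ∈ densFam μ, ∀ M' ∈ densFam μ, M ∩ M' ∈ densFam μ) ∧
    (∀ H ⊆ densFam μ, ⋃₀ H ∈ densFam μ) ∧
    ∃ T : TopologicalSpace (ℕ → Bool),
      ∀ s : Set (ℕ → Bool), T.IsOpen s ↔ s ∈ densFam μ := by
  have : IsFiniteMeasure μ := ⟨by simp [← cyl_nil, hμ]⟩
  have hcyl : ∀ s, μ (cyl s) ≠ 0 := fun s => by simp [hμ]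
  exact ⟨fun _ hM _ hM' => inter_mem_densFam hcyl hM hM', fun _ => sUnion_mem_densFam hcyl,
    { IsOpen := (· ∈ densFam μ)
      isOpen_univ := univ_mem_densFam hcyl
      isOpen_inter := fun _ _ => inter_mem_densFam hcyl
      isOpen_sUnion := fun _ => sUnion_mem_densFam hcyl }, fun _ => Iff.rfl⟩
end

section
/- The set 𝓟₁ of sequences of everywhere converging martingales whose associated functions converge pointwise, 𝓟₁ := {(f_k)_{k∈ℕ} ∈ 𝓟^ℕ : for every β ∈ 2^ω the sequence (ψ(f_k)(β))_{k∈ℕ} converges in ℝ}, is Π¹₁-complete: 𝓟₁ is a coanalytic subset of the Polish space ([0,1]^{2^{<ω}})^ℕ, and for every coanalytic subset A of 2^ω there is a continuous map g : 2^ω → 𝓜^ℕ with A = g⁻¹(𝓟₁). -/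
open MeasureTheory Filter Topology
open scoped ENNReal

/-- The compact space `𝓜` of martingales, as a subspace of `[0,1]^{2^{<ω}}`. -/
abbrev Mart := {f : List Bool → ℝ // IsMartingale f}

/-- The set `𝓟` of everywhere converging martingales. -/
def Pconv : Set Mart := {f | ∀ β : ℕ → Bool, osc f.1 β = 0}

/-- `𝓟₁`: sequences of everywhere converging martingales whose associated
functions converge pointwise. -/
def Pone : Set (ℕ → Mart) :=
  {F | (∀ k, F k ∈ Pconv) ∧
    ∀ β : ℕ → Bool, ∃ L : ℝ, Tendsto (fun k => psi (F k).1 β) atTop (𝓝 L)}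

/-!
`𝓟₁` is coanalytic because it is `{F | ∀ β, (F, β) ∈ S}` for a Borel set `S`: the oscillation
and `ψ` are Borel functions of `(f, β)`, being countable infima, suprema and limits of continuous
ones. Its complement is then the projection of a Borel subset of a Polish space.

For hardness, write `Aᶜ` as the range of a continuous `u : ℕ^ℕ → 2^ω`; then `β ∈ A` iff the tree
`attemptTree u β` of finite approximations to a `u`-preimage of `β` has no infinite branch. To a
tree `T` attach the martingale that, reading `β`, walks down `T` as long as `β` spells the codes
`1 0^m 1` of successive children, with value `3/8` or `5/8` according to the parity of the depth.
Along the code of an infinite branch it oscillates by `1/4`. Off such codes it changes value only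
when leaving a node, and the nodes visited along `β` lie on a single branch, so if `T` is well
founded it is eventually constant. Its value at a word `σ` depends on `T` only up to length `|σ|`,
so it varies continuously with `β`, and the constant sequence of these martingales reduces `A`
to `𝓟₁`.
-/

section InitialSegments

variable {α : Type*}

def initSeg (x : ℕ → α) (k : ℕ) : List α := List.ofFn fun i : Fin k => x i

lemma seg_eq_initSeg (β : ℕ → Bool) (l : ℕ) : seg β l = initSeg β l := rfl

@[simp] lemma length_initSeg (x : ℕ → α) (k : ℕ) : (initSeg x k).length = k := List.length_ofFn

@[simp] lemma initSeg_zero (x : ℕ → α) : initSeg x 0 = [] := rfl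

lemma initSeg_succ (x : ℕ → α) (k : ℕ) : initSeg x (k + 1) = initSeg x k ++ [x k] := by
  rw [initSeg, List.ofFn_succ', List.concat_eq_append]
  rfl

lemma initSeg_prefix_initSeg (x : ℕ → α) {k m : ℕ} (h : k ≤ m) :
    initSeg x k <+: initSeg x m := by
  induction m, h using Nat.le_induction with
  | base => exact List.prefix_rfl
  | succ m _ ih => exact ih.trans (initSeg_succ x m ▸ List.prefix_append _ _)

lemma initSeg_eq_initSeg_iff {x y : ℕ → α} {k : ℕ} :
    initSeg x k = initSeg y k ↔ ∀ i < k, x i = y i := by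
  simp [initSeg, List.ofFn_inj, funext_iff, Fin.forall_iff]

lemma initSeg_eq_initSeg_of_le {x y : ℕ → α} {k n : ℕ} (h : initSeg x n = initSeg y n)
    (hk : k ≤ n) : initSeg x k = initSeg y k :=
  initSeg_eq_initSeg_iff.2 fun i hi => initSeg_eq_initSeg_iff.1 h i (hi.trans_le hk)

lemma initSeg_length_eq_of_prefix {x : ℕ → α} {s : List α} {n : ℕ} (h : s <+: initSeg x n) :
    initSeg x s.length = s := by
  have hs : initSeg x s.length <+: initSeg x n :=
    initSeg_prefix_initSeg x (by simpa using h.length_le)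
  exact (List.prefix_of_prefix_length_le hs h (by simp)).eq_of_length (by simp)

lemma exists_initSeg_eq_of_chain {S : ℕ → List α} (hS : ∀ n, S n <+: S (n + 1))
    (hlen : ∀ n, (S n).length < (S (n + 1)).length) :
    ∃ x : ℕ → α, ∀ k, initSeg x (S k).length = S k := by
  have hmono : ∀ {i j}, i ≤ j → S i <+: S j := fun {i j} h => by
    induction j, h using Nat.le_induction with
    | base => exact List.prefix_rfl
    | succ j _ ih => exact ih.trans (hS j)
  have hlong : ∀ n, n < (S (n + 1)).length := fun n =>
    (StrictMono.id_le (strictMono_nat_of_lt_succ hlen) n).trans_lt (hlen n)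
  refine ⟨fun n => (S (n + 1))[n]'(hlong n), fun k =>
    List.ext_getElem (by simp) fun i hi _ => ?_⟩
  simp only [initSeg, List.getElem_ofFn]
  rcases le_total (i + 1) k with h | h
  · exact (hmono h).getElem _
  · exact ((hmono h).getElem _).symm

variable [TopologicalSpace α]

lemma tendsto_of_initSeg_eq {y : ℕ → ℕ → α} {x : ℕ → α}
    (h : ∀ k, initSeg (y k) k = initSeg x k) : Tendsto y atTop (𝓝 x) := by
  refine tendsto_pi_nhds.2 fun i => tendsto_const_nhds.congr' ?_
  filter_upwards [eventually_gt_atTop i] with k hk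
  exact (initSeg_eq_initSeg_iff.1 (h k) i hk).symm

variable [DiscreteTopology α]

lemma eventually_initSeg_eq (x : ℕ → α) (n : ℕ) : ∀ᶠ y in 𝓝 x, initSeg y n = initSeg x n := by
  simp only [initSeg_eq_initSeg_iff]
  refine (Set.finite_lt_nat n).eventually_all.2 fun i _ => ?_
  exact tendsto_pure.1 (nhds_discrete α ▸ (continuous_apply i).tendsto x)

lemma continuous_of_initSeg_eq {Y : Type*} [TopologicalSpace Y] {g : (ℕ → α) → Y} (n : ℕ)
    (h : ∀ x y, initSeg x n = initSeg y n → g x = g y) : Continuous g :=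
  continuous_iff_continuousAt.2 fun x =>
    continuousAt_const.congr ((eventually_initSeg_eq x n).mono fun y hy => h x y hy.symm)

lemma continuous_apply_initSeg {X Y : Type*} [TopologicalSpace X] [TopologicalSpace Y]
    {F : X → List α → Y} (hF : ∀ s, Continuous fun x => F x s) (n : ℕ) :
    Continuous fun p : X × (ℕ → α) => F p.1 (initSeg p.2 n) :=
  continuous_iff_continuousAt.2 fun p =>
    ((hF (initSeg p.2 n)).comp continuous_fst).continuousAt.congr
      (((continuous_snd.tendsto p).eventually (eventually_initSeg_eq p.2 n)).mono fun q hq => by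
        simp only [Function.comp_apply, hq])

end InitialSegments

section Oscillation

variable {f : List Bool → ℝ} {β : ℕ → Bool}

lemma osc_nonneg : 0 ≤ osc f β :=
  Real.iInf_nonneg fun _ => Real.iSup_nonneg fun _ => Real.iSup_nonneg fun _ => abs_nonneg _

lemma osc_le {N : ℕ} {ε : ℝ} (hε : 0 ≤ ε)
    (h : ∀ p ≥ N, ∀ q ≥ N, |f (seg β p) - f (seg β q)| ≤ ε) : osc f β ≤ ε :=
  (ciInf_le ⟨0, Set.forall_mem_range.2 fun _ =>
      Real.iSup_nonneg fun _ => Real.iSup_nonneg fun _ => abs_nonneg _⟩ N).trans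
    (Real.iSup_le (fun p => Real.iSup_le (fun q => h _ p.2 _ q.2) hε) hε)

lemma le_osc (hf : ∀ s, f s ∈ Set.Icc (0 : ℝ) 1) {δ : ℝ}
    (h : ∀ N, ∃ p ≥ N, ∃ q ≥ N, δ ≤ |f (seg β p) - f (seg β q)|) : δ ≤ osc f β := by
  have hbdd (p q : List Bool) : |f p - f q| ≤ 1 :=
    abs_sub_le_of_nonneg_of_le (hf p).1 (hf p).2 (hf q).1 (hf q).2
  refine le_ciInf fun N => ?_
  obtain ⟨p, hp, q, hq, hδ⟩ := h N
  calc δ ≤ |f (seg β p) - f (seg β q)| := hδ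
    _ ≤ ⨆ q' : {n // N ≤ n}, |f (seg β p) - f (seg β q')| :=
      le_ciSup (f := fun q' : {n // N ≤ n} => |f (seg β p) - f (seg β q')|)
        ⟨1, Set.forall_mem_range.2 fun _ => hbdd _ _⟩ ⟨q, hq⟩
    _ ≤ ⨆ p' : {n // N ≤ n}, ⨆ q' : {n // N ≤ n}, |f (seg β p') - f (seg β q')| :=
      le_ciSup
        (f := fun p' : {n // N ≤ n} => ⨆ q' : {n // N ≤ n}, |f (seg β p') - f (seg β q')|)
        ⟨1, Set.forall_mem_range.2 fun _ => Real.iSup_le (fun _ => hbdd _ _) zero_le_one⟩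
        ⟨p, hp⟩

lemma osc_eq_zero_of_eventually_const {N : ℕ} (h : ∀ l ≥ N, f (seg β l) = f (seg β N)) :
    osc f β = 0 :=
  le_antisymm (osc_le (N := N) le_rfl fun p hp q hq => by simp [h p hp, h q hq]) osc_nonneg

end Oscillation

lemma continuous_apply_seg (l : ℕ) :
    Continuous fun p : (List Bool → ℝ) × (ℕ → Bool) => p.1 (seg p.2 l) :=
  continuous_apply_initSeg (F := fun (f : List Bool → ℝ) s => f s) continuous_apply l

lemma measurable_osc : Measurable fun p : (List Bool → ℝ) × (ℕ → Bool) => osc p.1 p.2 :=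
  Measurable.iInf fun _ => Measurable.iSup fun p => Measurable.iSup fun q =>
    ((continuous_apply_seg p.1).sub (continuous_apply_seg q.1)).abs.measurable

lemma measurable_psi : Measurable fun p : (List Bool → ℝ) × (ℕ → Bool) => psi p.1 p.2 :=
  (StronglyMeasurable.limUnder fun l => (continuous_apply_seg l).stronglyMeasurable).measurable

lemma isCoanalytic_setOf_forall {X Y : Type*} [TopologicalSpace X] [PolishSpace X]
    [MeasurableSpace X] [BorelSpace X] [TopologicalSpace Y] [PolishSpace Y] [MeasurableSpace Y]
    [BorelSpace Y] {S : Set (X × Y)} (hS : MeasurableSet S) :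
    IsCoanalytic {x | ∀ y, (x, y) ∈ S} := by
  have : {x | ∀ y, (x, y) ∈ S}ᶜ = Prod.fst '' Sᶜ := by ext; simp
  rw [IsCoanalytic, this]
  exact hS.compl.analyticSet.image_of_continuous continuous_fst

lemma isClosed_setOf_isMartingale : IsClosed {f : List Bool → ℝ | IsMartingale f} := by
  simp only [IsMartingale, Set.ofPred_and, Set.ofPred_forall]
  exact (isClosed_iInter fun s => isClosed_Icc.preimage (continuous_apply s)).inter
    (isClosed_iInter fun s => isClosed_eq (continuous_apply s) (by fun_prop))

instance : PolishSpace Mart := isClosed_setOf_isMartingale.polishSpace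

lemma isCoanalytic_Pone : IsCoanalytic Pone := by
  have : PolishSpace (ℕ → Bool) := {}
  have hval (k : ℕ) : Continuous fun z : (ℕ → Mart) × (ℕ → Bool) => ((z.1 k).1, z.2) := by
    fun_prop
  have hS : MeasurableSet ((⋂ k, {z : (ℕ → Mart) × (ℕ → Bool) | osc (z.1 k).1 z.2 = 0}) ∩
      {z | ∃ L, Tendsto (fun k => psi (z.1 k).1 z.2) atTop (𝓝 L)}) :=
    (MeasurableSet.iInter fun k => measurableSet_eq_fun
      (measurable_osc.comp (hval k).measurable) measurable_const).inter
    (measurableSet_exists_tendsto fun k => measurable_psi.comp (hval k).measurable)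
  convert isCoanalytic_setOf_forall hS using 1
  ext F
  simp only [Pone, Pconv, Set.mem_ofPred_eq, Set.mem_inter_iff, Set.mem_iInter]
  exact ⟨fun h β => ⟨fun k => h.1 k β, h.2 β⟩,
    fun h => ⟨fun k β => (h β).1 k, fun β => (h β).2⟩⟩

def codeDigit (m : ℕ) : List Bool := true :: (List.replicate m false ++ [true])

def codeList (s : List ℕ) : List Bool := s.flatMap codeDigit

@[simp] lemma codeList_nil : codeList [] = [] := rfl

lemma codeList_append_singleton (s : List ℕ) (m : ℕ) :
    codeList (s ++ [m]) = codeList s ++ codeDigit m := by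
  simp [codeList]

lemma length_le_length_codeList (s : List ℕ) : s.length ≤ (codeList s).length := by
  induction s with
  | nil => simp
  | cons a s ih => simp [codeList, codeDigit] at *; omega

lemma eq_of_replicate_append_prefix {a b : ℕ} {w w' : List Bool}
    (h : List.replicate a false ++ true :: w <+: List.replicate b false ++ true :: w') : a = b := by
  induction a generalizing b with
  | zero => cases b <;> simp_all [List.replicate_succ, List.cons_prefix_cons]
  | succ a ih =>
    cases b with
    | zero => simp_all [List.replicate_succ, List.cons_prefix_cons]
    | succ b => exact congrArg (· + 1) (ih (by simpa [List.replicate_succ] using h))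

lemma prefix_of_codeList_prefix {s t : List ℕ} (h : codeList s <+: codeList t) : s <+: t := by
  induction s generalizing t with
  | nil => exact List.nil_prefix
  | cons a s ih =>
    cases t with
    | nil => simp [codeList, codeDigit] at h
    | cons b t =>
      simp only [codeList, List.flatMap_cons, codeDigit, List.cons_append, List.append_assoc,
        List.nil_append, List.cons_prefix_cons, true_and] at h
      obtain rfl := eq_of_replicate_append_prefix h
      rw [List.prefix_append_right_inj, List.cons_prefix_cons] at h
      exact List.cons_prefix_cons.2 ⟨rfl, ih h.2⟩

noncomputable def levelValue (k : ℕ) : ℝ := if Even k then 3 / 8 else 5 / 8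

lemma levelValue_mem (k : ℕ) : levelValue k ∈ Set.Icc (0 : ℝ) 1 := by
  unfold levelValue; split_ifs <;> norm_num

lemma levelValue_succ (k : ℕ) : levelValue (k + 1) = 1 - levelValue k := by
  simp only [levelValue, Nat.even_add_one]
  split_ifs <;> norm_num

lemma abs_levelValue_sub_succ (k : ℕ) : |levelValue k - levelValue (k + 1)| = 1 / 4 := by
  rw [levelValue_succ]; unfold levelValue; split_ifs <;> norm_num

/-- A walk in a tree `T` reading a binary word: at `node s` a `0` halts the walk and a `1` starts
reading the code `0^m 1` of a child `s ++ [m]`, which is entered if it lies in `T`. -/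
inductive TreeState
  | node (s : List ℕ)
  | seek (s : List ℕ) (m : ℕ)
  | halt (v : ℝ)

namespace TreeState

variable (T : List ℕ → Prop)

open scoped Classical in
noncomputable def enter (s : List ℕ) : TreeState :=
  if T s then node s else halt (levelValue s.length)

noncomputable def step : TreeState → Bool → TreeState
  -- the halting value makes the value at `node s` the mean of its two successors
  | node s, false => halt (2 * levelValue s.length - levelValue (s.length + 1))
  | node s, true => seek s 0
  | seek s m, false => seek s (m + 1)
  | seek s m, true => enter T (s ++ [m])
  | halt v, _ => halt v

noncomputable def value : TreeState → ℝ
  | node s => levelValue s.length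
  | seek s _ => levelValue (s.length + 1)
  | halt v => v

noncomputable def run (σ : List Bool) : TreeState := σ.foldl (step T) (enter T [])

def Consistent (σ : List Bool) : TreeState → Prop
  | node s => T s ∧ σ = codeList s
  | seek s m => T s ∧ σ = codeList s ++ true :: List.replicate m false
  | halt _ => True

variable {T}

lemma value_enter (s : List ℕ) : (enter T s).value = levelValue s.length := by
  unfold enter; split_ifs <;> rfl

lemma value_step_mem {st : TreeState} (h : st.value ∈ Set.Icc (0 : ℝ) 1) (b : Bool) :
    (step T st b).value ∈ Set.Icc (0 : ℝ) 1 := by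
  rcases st with s | ⟨s, m⟩ | v <;> cases b
  · simp only [step, value, levelValue_succ]; unfold levelValue; split_ifs <;> norm_num
  all_goals simp only [step, value_enter]
  all_goals simp only [value, List.length_append, List.length_singleton]
  all_goals first | exact levelValue_mem _ | exact h

lemma value_eq_average (st : TreeState) :
    st.value = ((step T st false).value + (step T st true).value) / 2 := by
  rcases st with s | ⟨s, m⟩ | v <;> simp only [step, value_enter] <;>
    simp only [value, List.length_append, List.length_singleton] <;> ring

lemma value_step_of_ne_node {st : TreeState} (h : ∀ s, st ≠ node s) (b : Bool) :
    (step T st b).value = st.value := by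
  rcases st with s | ⟨s, m⟩ | v
  · exact absurd rfl (h s)
  all_goals cases b <;> simp only [step, value_enter] <;> simp [value]

lemma run_append (σ τ : List Bool) : run T (σ ++ τ) = τ.foldl (step T) (run T σ) :=
  List.foldl_append

lemma run_append_singleton (σ : List Bool) (b : Bool) :
    run T (σ ++ [b]) = step T (run T σ) b := by
  simp [run_append]

lemma consistent_run (σ : List Bool) : (run T σ).Consistent T σ := by
  induction σ using List.reverseRecOn with
  | nil => unfold run enter; split_ifs <;> simp_all [Consistent]
  | append_singleton σ b ih =>
    rw [run_append_singleton]
    rcases hst : run T σ with s | ⟨s, m⟩ | v <;> rw [hst] at ih <;> cases b <;>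
      simp only [step, Consistent, enter] at ih ⊢
    · simp [ih.1, ih.2]
    · simp [ih.1, ih.2, List.replicate_succ']
    · split_ifs with hT
      · simp [hT, ih.2, codeList_append_singleton, codeDigit]
      · trivial

end TreeState

open TreeState

noncomputable def treeMartingale (T : List ℕ → Prop) (σ : List Bool) : ℝ := (run T σ).value

lemma isMartingale_treeMartingale (T : List ℕ → Prop) : IsMartingale (treeMartingale T) := by
  refine ⟨fun σ => ?_, fun σ => ?_⟩
  · induction σ using List.reverseRecOn with
    | nil => simpa [treeMartingale, run, value_enter] using levelValue_mem 0
    | append_singleton σ b ih =>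
      rw [treeMartingale, run_append_singleton]
      exact value_step_mem ih b
  · simp only [treeMartingale, run_append_singleton]
    exact value_eq_average _

section Runs

variable {T : List ℕ → Prop}

lemma enter_congr {T' : List ℕ → Prop} {s : List ℕ} (h : T s ↔ T' s) :
    enter T s = enter T' s := by
  classical exact if_congr h rfl rfl

lemma run_congr {T' : List ℕ → Prop} (σ : List Bool)
    (h : ∀ s : List ℕ, s.length ≤ σ.length → (T s ↔ T' s)) : run T σ = run T' σ := by
  induction σ using List.reverseRecOn with
  | nil => exact enter_congr (h [] le_rfl)
  | append_singleton σ b ih =>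
    have hσ := consistent_run (T := T) σ
    rw [run_append_singleton, run_append_singleton, ← ih fun s hs => h s (by simp; omega)]
    rcases hst : run T σ with s | ⟨s, m⟩ | v <;> cases b <;> try rfl
    rw [hst] at hσ
    refine enter_congr (h _ ?_)
    have := length_le_length_codeList s
    simp [hσ.2]
    omega

lemma foldl_step_replicate (s : List ℕ) (m j : ℕ) :
    (List.replicate j false).foldl (step T) (seek s m) = seek s (m + j) := by
  induction j generalizing m with
  | zero => rfl
  | succ j ih =>
    rw [List.replicate_succ, List.foldl_cons, step, ih]
    congr 1
    omega

lemma run_codeList_initSeg {x : ℕ → ℕ} (hx : ∀ k, T (initSeg x k)) (k : ℕ) :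
    run T (codeList (initSeg x k)) = node (initSeg x k) := by
  induction k with
  | zero => simpa [run, enter] using hx 0
  | succ k ih =>
    rw [initSeg_succ, codeList_append_singleton, run_append, ih, codeDigit, List.foldl_cons,
      List.foldl_append, step, foldl_step_replicate]
    simp [step, enter, ← initSeg_succ, hx (k + 1)]

lemma osc_treeMartingale_eq_zero (hT : ∀ s t, s <+: t → T t → T s)
    (hwf : ∀ x : ℕ → ℕ, ∃ k, ¬ T (initSeg x k)) (β : ℕ → Bool) :
    osc (treeMartingale T) β = 0 := by
  by_cases hnode : ∃ᶠ l in atTop, ∃ s, run T (seg β l) = node s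
  · exfalso
    obtain ⟨φ, hφ, hφnode⟩ := extraction_of_frequently_atTop hnode
    choose S hS using hφnode
    have hcons (n : ℕ) : T (S n) ∧ seg β (φ n) = codeList (S n) := by
      simpa only [hS n, Consistent] using consistent_run (T := T) (seg β (φ n))
    have hpre (n : ℕ) : S n <+: S (n + 1) := prefix_of_codeList_prefix <| by
      rw [← (hcons n).2, ← (hcons (n + 1)).2]
      exact initSeg_prefix_initSeg β (hφ n.lt_succ_self).le
    have hlen (n : ℕ) : (S n).length < (S (n + 1)).length := by
      refine (hpre n).length_le.lt_of_ne fun heq => (hφ n.lt_succ_self).ne ?_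
      simpa [← (hcons n).2, ← (hcons (n + 1)).2, seg_eq_initSeg] using
        congrArg (fun s => (codeList s).length) ((hpre n).eq_of_length heq)
    obtain ⟨x, hx⟩ := exists_initSeg_eq_of_chain hpre hlen
    obtain ⟨k, hk⟩ := hwf x
    refine hk (hT _ _ ?_ ((hx k).symm ▸ (hcons k).1))
    exact initSeg_prefix_initSeg x ((strictMono_nat_of_lt_succ hlen).id_le k)
  · obtain ⟨N, hN⟩ := eventually_atTop.1 (not_frequently.1 hnode)
    refine osc_eq_zero_of_eventually_const (N := N) fun l hl => ?_
    induction l, hl using Nat.le_induction with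
    | base => rfl
    | succ l hl ih =>
      rw [← ih, treeMartingale, seg_eq_initSeg, initSeg_succ, run_append_singleton]
      exact value_step_of_ne_node (fun s hs => hN l hl ⟨s, hs⟩) _

lemma exists_osc_treeMartingale_ne_zero {x : ℕ → ℕ} (hx : ∀ k, T (initSeg x k)) :
    ∃ β, osc (treeMartingale T) β ≠ 0 := by
  have hpre (k : ℕ) : codeList (initSeg x k) <+: codeList (initSeg x (k + 1)) := by
    rw [initSeg_succ, codeList_append_singleton]
    exact List.prefix_append _ _
  have hlen (k : ℕ) :
      (codeList (initSeg x k)).length < (codeList (initSeg x (k + 1))).length := by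
    simp [initSeg_succ, codeList_append_singleton, codeDigit]
  obtain ⟨β, hβ⟩ := exists_initSeg_eq_of_chain hpre hlen
  have hval (k : ℕ) :
      treeMartingale T (seg β (codeList (initSeg x k)).length) = levelValue k := by
    rw [treeMartingale, seg_eq_initSeg, hβ, run_codeList_initSeg hx]
    simp [value]
  have hmono := (strictMono_nat_of_lt_succ hlen).id_le
  have hosc : 1 / 4 ≤ osc (treeMartingale T) β :=
    le_osc (isMartingale_treeMartingale T).1 fun N =>
      ⟨_, hmono N, _, N.le_succ.trans (hmono (N + 1)), by rw [hval, hval, abs_levelValue_sub_succ]⟩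
  exact ⟨β, (lt_of_lt_of_le (by norm_num) hosc).ne'⟩

end Runs

noncomputable def treeMart (T : List ℕ → Prop) : Mart :=
  ⟨treeMartingale T, isMartingale_treeMartingale T⟩

lemma treeMart_mem_Pconv_iff {T : List ℕ → Prop} (hT : ∀ s t, s <+: t → T t → T s) :
    treeMart T ∈ Pconv ↔ ∀ x : ℕ → ℕ, ∃ k, ¬ T (initSeg x k) := by
  refine ⟨fun h x => ?_, fun h => osc_treeMartingale_eq_zero hT h⟩
  by_contra! hx
  obtain ⟨β, hβ⟩ := exists_osc_treeMartingale_ne_zero hx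
  exact hβ (h β)

def attemptTree (u : (ℕ → ℕ) → ℕ → Bool) (β : ℕ → Bool) (s : List ℕ) : Prop :=
  ∃ x, initSeg x s.length = s ∧ initSeg (u x) s.length = initSeg β s.length

section AttemptTree

variable {u : (ℕ → ℕ) → ℕ → Bool} {β : ℕ → Bool}

lemma attemptTree_of_prefix {s t : List ℕ} (hst : s <+: t) (ht : attemptTree u β t) :
    attemptTree u β s := by
  obtain ⟨x, hx, hux⟩ := ht
  exact ⟨x, initSeg_length_eq_of_prefix (hx ▸ hst), initSeg_eq_initSeg_of_le hux hst.length_le⟩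

lemma forall_attemptTree_initSeg_iff (hu : Continuous u) {x : ℕ → ℕ} :
    (∀ k, attemptTree u β (initSeg x k)) ↔ u x = β := by
  refine ⟨fun h => ?_, fun hux k => ⟨x, by simp, by simp [hux]⟩⟩
  choose y hy using h
  simp only [length_initSeg] at hy
  exact tendsto_nhds_unique ((hu.tendsto x).comp (tendsto_of_initSeg_eq fun k => (hy k).1))
    (tendsto_of_initSeg_eq fun k => (hy k).2)

variable (u) in
lemma continuous_treeMart_attemptTree : Continuous fun β => treeMart (attemptTree u β) :=
  (continuous_pi fun σ => continuous_of_initSeg_eq σ.length fun β β' h =>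
    congrArg value (run_congr σ fun s hs => by
      simp only [attemptTree, initSeg_eq_initSeg_of_le h hs])).subtype_mk _

end AttemptTree

lemma exists_continuous_reduction_to_Pconv {A : Set (ℕ → Bool)} (hA : IsCoanalytic A) :
    ∃ h : (ℕ → Bool) → Mart, Continuous h ∧ A = h ⁻¹' Pconv := by
  rw [IsCoanalytic, AnalyticSet_def] at hA
  rcases hA with hA | ⟨u, hu, hrange⟩
  · refine ⟨fun _ => treeMart fun _ => False, continuous_const, ?_⟩
    rw [Set.compl_empty_iff.1 hA, Set.preimage_const_of_mem]
    exact (treeMart_mem_Pconv_iff fun _ _ _ h => h).2 fun _ => ⟨0, id⟩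
  · refine ⟨fun β => treeMart (attemptTree u β), continuous_treeMart_attemptTree u, ?_⟩
    ext β
    rw [Set.mem_preimage, treeMart_mem_Pconv_iff fun _ _ => attemptTree_of_prefix,
      ← Set.notMem_compl_iff, ← hrange]
    simp only [Set.mem_range, not_exists, ← forall_attemptTree_initSeg_iff hu, not_forall]

lemma const_mem_Pone_iff {f : Mart} : (fun _ : ℕ => f) ∈ Pone ↔ f ∈ Pconv :=
  ⟨fun h => h.1 0, fun h => ⟨fun _ => h, fun _ => ⟨_, tendsto_const_nhds⟩⟩⟩

/-- `𝓟₁` is `Π¹₁`-complete. -/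
theorem Pone_coanalytic_complete :
    IsCoanalytic Pone ∧
    ∀ A : Set (ℕ → Bool), IsCoanalytic A →
      ∃ g : (ℕ → Bool) → (ℕ → Mart), Continuous g ∧ A = g ⁻¹' Pone := by
  refine ⟨isCoanalytic_Pone, fun A hA => ?_⟩
  obtain ⟨h, hh, rfl⟩ := exists_continuous_reduction_to_Pconv hA
  exact ⟨fun β _ => h β, continuous_pi fun _ => hh, Set.ext fun _ => const_mem_Pone_iff.symm⟩
end
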